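/- In the setting of geodesics γ_ε of curvature λ leaving orthogonally from a horizontal curve Γ, at the cut value s_ε (where the vertical component of the Jacobi field X_ε vanishes) one has X_ε(s_ε) = i·γ_ε'(s_ε); i.e., X_ε(s_ε) is the unit horizontal vector J applied to the geodesic's velocity. -/

import Mathlib

open Real
open scoped RealInnerProductSpace

def qi : Quaternion ℝ := ⟨0, 1, 0, 0⟩

/-!
With `expQi θ = cos θ + sin θ · i` acting by left multiplication, the substitution
`γ_ε(s) = expQi(-λs) β_ε(s)` turns the geodesic equation `γ'' + γ + 2λ iγ' = 0` into
`β'' + ω² β = 0`, `ω = √(1 + λ²)`. By uniqueness (the energy `|y|² + |y'|²` is conserved because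
`i` is skew), `β_ε(s) = cos(ωs) Γ + (sin(ωs)/ω)(iΓ' + λ iΓ)`, and `X_ε(s)` is the same expression in
`(Γ', Γ'')`. Since `expQi` is an isometry commuting with `i`, everything reduces to the orthonormal
frame `Γ, iΓ, Γ', iΓ'`, in which `Γ'' = -Γ + h iΓ'`. There, with `σ = sin(ωs)/ω`, the difference
`X - iγ'` is `(2 cos(ωs) - σh)` times `expQi(-λs) Γ'`, while `⟪X, iγ⟫ = σ (σh - 2 cos(ωs))`.
Before the first conjugate point `σ ≠ 0`, so the vanishing of `⟪X, iγ⟫` forces `X = iγ'`.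
-/

theorem Orthonormal.sum_inner_smul_eq {𝕜 F ι : Type*} [RCLike 𝕜] [NormedAddCommGroup F]
    [InnerProductSpace 𝕜 F] [FiniteDimensional 𝕜 F] [Fintype ι] {e : ι → F}
    (he : Orthonormal 𝕜 e) (hcard : Fintype.card ι = Module.finrank 𝕜 F) (x : F) :
    ∑ i, inner 𝕜 (e i) x • e i = x := by
  simpa using
    (OrthonormalBasis.mk he
      (he.linearIndependent.span_eq_top_of_card_eq_finrank' hcard).ge).sum_repr' x

lemma inner_add_inner_eq_zero_of_inner_const {F : Type*} [NormedAddCommGroup F]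
    [InnerProductSpace ℝ F] {f g : ℝ → F} {f' g' : F} {t c : ℝ} (hf : HasDerivAt f f' t)
    (hg : HasDerivAt g g' t) (hc : ∀ s, ⟪f s, g s⟫ = c) : ⟪f', g t⟫ + ⟪f t, g'⟫ = 0 := by
  have h := hf.inner ℝ hg
  rw [funext hc, add_comm] at h
  exact h.unique (hasDerivAt_const t c)

lemma inner_deriv_self_eq_zero_of_norm_const {F : Type*} [NormedAddCommGroup F]
    [InnerProductSpace ℝ F] {f : ℝ → F} {f' : F} {t c : ℝ} (hf : HasDerivAt f f' t)
    (hc : ∀ s, ‖f s‖ = c) : ⟪f', f t⟫ = 0 := by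
  have h := inner_add_inner_eq_zero_of_inner_const hf hf (c := c ^ 2)
    (fun s => by rw [real_inner_self_eq_norm_sq, hc])
  linarith [real_inner_comm (f t) f']

lemma eq_zero_of_skew_second_order_ode {F : Type*} [NormedAddCommGroup F]
    [InnerProductSpace ℝ F] (A : F → F) (hA : ∀ v, ⟪A v, v⟫ = 0) {y y' y'' : ℝ → F}
    (hy : ∀ s, HasDerivAt y (y' s) s) (hy' : ∀ s, HasDerivAt y' (y'' s) s)
    (hode : ∀ s, y'' s + y s + A (y' s) = 0) (h0 : y 0 = 0) (h0' : y' 0 = 0) (s : ℝ) :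
    y s = 0 := by
  let energy : ℝ → ℝ := fun t => ⟪y t, y t⟫ + ⟪y' t, y' t⟫
  have henergy : ∀ t, HasDerivAt energy 0 t := fun t => by
    refine (((hy t).inner ℝ (hy t)).add ((hy' t).inner ℝ (hy' t))).congr_deriv ?_
    have hy'' : y'' t = -y t - A (y' t) := by linear_combination (norm := module) hode t
    rw [hy'', inner_sub_left, inner_sub_right, inner_neg_left, inner_neg_right,
      real_inner_comm (A (y' t)), hA, real_inner_comm (y t) (y' t)]
    ring
  have hconst : energy s = energy 0 :=
    is_const_of_deriv_eq_zero (fun t => (henergy t).differentiableAt)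
      (fun t => (henergy t).deriv) s 0
  have hs : ⟪y s, y s⟫ + ⟪y' s, y' s⟫ = 0 := by simpa [energy, h0, h0'] using hconst
  exact inner_self_eq_zero.mp (le_antisymm (by linarith [real_inner_self_nonneg (x := y' s)])
    real_inner_self_nonneg)

section Oscillator

variable {E : Type*} [NormedAddCommGroup E] [NormedSpace ℝ E]

noncomputable def osc (ω : ℝ) (a v : E) (s : ℝ) : E := cos (ω * s) • a + (sin (ω * s) / ω) • v

lemma osc_zero (ω : ℝ) (a v : E) : osc ω a v 0 = a := by simp [osc]

lemma osc_smul (ω c : ℝ) (a v : E) (s : ℝ) : osc ω (c • a) (c • v) s = c • osc ω a v s := by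
  simp only [osc, smul_add, smul_comm c]

lemma hasDerivAt_osc {ω : ℝ} (hω : ω ≠ 0) (a v : E) (s : ℝ) :
    HasDerivAt (osc ω a v) (osc ω v (-ω ^ 2 • a) s) s := by
  have hωs : HasDerivAt (fun t => ω * t) ω s := by simpa using (hasDerivAt_id s).const_mul ω
  have h := (((hasDerivAt_cos _).comp s hωs).smul_const a).add
    ((((hasDerivAt_sin _).comp s hωs).div_const ω).smul_const v)
  refine h.congr_deriv ?_
  simp only [osc, smul_smul]
  field_simp
  module

lemma hasDerivAt_osc_data (ω : ℝ) {a v : ℝ → E} {a' v' : E} {ε : ℝ} (s : ℝ)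
    (ha : HasDerivAt a a' ε) (hv : HasDerivAt v v' ε) :
    HasDerivAt (fun e => osc ω (a e) (v e) s) (osc ω a' v' s) ε :=
  (ha.const_smul _).add (hv.const_smul _)

end Oscillator

lemma qi_mul_qi : qi * qi = -1 := by
  ext <;>
    simp only [Quaternion.re_mul, Quaternion.imI_mul, Quaternion.imJ_mul, Quaternion.imK_mul] <;>
    simp [qi, Quaternion.re_one, Quaternion.imI_one, Quaternion.imJ_one, Quaternion.imK_one]

lemma qi_mul_qi_mul (x : Quaternion ℝ) : qi * (qi * x) = -x := by
  rw [← mul_assoc, qi_mul_qi, neg_one_mul]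

lemma inner_qi_mul_left (x y : Quaternion ℝ) : ⟪qi * x, y⟫ = -⟪x, qi * y⟫ := by
  simp only [Quaternion.inner_def, Quaternion.re_mul, Quaternion.imI_mul, Quaternion.imJ_mul,
    Quaternion.imK_mul, Quaternion.re_star, Quaternion.imI_star, Quaternion.imJ_star,
    Quaternion.imK_star]
  simp only [qi]
  ring

lemma inner_qi_mul_self (x : Quaternion ℝ) : ⟪qi * x, x⟫ = 0 := by
  linarith [inner_qi_mul_left x x, real_inner_comm (qi * x) x]

lemma inner_qi_mul_qi_mul (x y : Quaternion ℝ) : ⟪qi * x, qi * y⟫ = ⟪x, y⟫ := by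
  rw [inner_qi_mul_left, qi_mul_qi_mul, inner_neg_right, neg_neg]

lemma orthonormal_qi_frame {a b : Quaternion ℝ} (ha : ‖a‖ = 1) (hb : ‖b‖ = 1)
    (hba : ⟪b, a⟫ = 0) (hbqa : ⟪b, qi * a⟫ = 0) :
    Orthonormal ℝ ![a, qi * a, b, qi * b] := by
  have hab : ⟪a, b⟫ = 0 := by rw [real_inner_comm, hba]
  have hqab : ⟪qi * a, b⟫ = 0 := by rw [real_inner_comm, hbqa]
  have haqb : ⟪a, qi * b⟫ = 0 := by rw [← neg_eq_zero, ← inner_qi_mul_left, hqab]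
  have hbqb : ⟪b, qi * b⟫ = 0 := by rw [real_inner_comm, inner_qi_mul_self]
  have haqa : ⟪a, qi * a⟫ = 0 := by rw [real_inner_comm, inner_qi_mul_self]
  have hqba : ⟪qi * b, a⟫ = 0 := by rw [real_inner_comm, haqb]
  have norm_qi : ‖qi‖ = 1 := by
    rw [norm_eq_sqrt_real_inner, Quaternion.inner_self, Quaternion.normSq_def']
    simp [qi]
  rw [orthonormal_iff_ite]
  intro i j
  fin_cases i <;> fin_cases j <;>
    simp [hab, hba, hbqa, hqab, haqb, hqba, hbqb, haqa, inner_qi_mul_self, inner_qi_mul_qi_mul,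
      ha, hb, norm_qi]

lemma qi_frame_sum_inner_smul {a b : Quaternion ℝ} (hO : Orthonormal ℝ ![a, qi * a, b, qi * b])
    (w : Quaternion ℝ) :
    ⟪a, w⟫ • a + ⟪qi * a, w⟫ • (qi * a) + ⟪b, w⟫ • b + ⟪qi * b, w⟫ • (qi * b) = w := by
  simpa [Fin.sum_univ_four, add_assoc] using
    hO.sum_inner_smul_eq (by simp [Quaternion.finrank_eq_four]) w

lemma inner_qi_frame {a b : Quaternion ℝ} (hO : Orthonormal ℝ ![a, qi * a, b, qi * b])
    (x₀ x₁ x₂ x₃ y₀ y₁ y₂ y₃ : ℝ) :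
    ⟪x₀ • a + x₁ • (qi * a) + x₂ • b + x₃ • (qi * b),
      y₀ • a + y₁ • (qi * a) + y₂ • b + y₃ • (qi * b)⟫ = x₀ * y₀ + x₁ * y₁ + x₂ * y₂ + x₃ * y₃ := by
  simpa [Fin.sum_univ_four, add_assoc] using hO.inner_sum ![x₀, x₁, x₂, x₃] ![y₀, y₁, y₂, y₃] .univ

noncomputable def expQi (θ : ℝ) : Quaternion ℝ := cos θ • 1 + sin θ • qi

lemma expQi_zero : expQi 0 = 1 := by simp [expQi]

lemma qi_mul_expQi_mul (θ : ℝ) (x : Quaternion ℝ) : qi * (expQi θ * x) = expQi θ * (qi * x) := by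
  simp only [expQi, ← mul_assoc, mul_add, add_mul, mul_smul_comm, smul_mul_assoc, one_mul]

lemma hasDerivAt_expQi (θ : ℝ) : HasDerivAt expQi (qi * expQi θ) θ := by
  have h : HasDerivAt expQi (-sin θ • 1 + cos θ • qi) θ :=
    ((hasDerivAt_cos θ).smul_const (1 : Quaternion ℝ)).add ((hasDerivAt_sin θ).smul_const qi)
  refine h.congr_deriv ?_
  simp only [expQi, mul_add, mul_smul_comm, qi_mul_qi, mul_one]
  module

lemma inner_expQi_mul_expQi_mul (θ : ℝ) (x y : Quaternion ℝ) :
    ⟪expQi θ * x, expQi θ * y⟫ = ⟪x, y⟫ := by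
  simp only [expQi, add_mul, smul_mul_assoc, one_mul, inner_add_left, inner_add_right,
    real_inner_smul_left, real_inner_smul_right, inner_qi_mul_qi_mul]
  rw [inner_qi_mul_left]
  linear_combination ⟪x, y⟫ * sin_sq_add_cos_sq θ

lemma hasDerivAt_expQi_mul {β : ℝ → Quaternion ℝ} {β' : Quaternion ℝ} (lam : ℝ) {s : ℝ}
    (hβ : HasDerivAt β β' s) :
    HasDerivAt (fun t => expQi (-(lam * t)) * β t)
      (expQi (-(lam * s)) * (β' - lam • (qi * β s))) s := by
  have hθ : HasDerivAt (fun t => -(lam * t)) (-lam) s :=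
    ((hasDerivAt_id s).const_mul lam).neg.congr_deriv (by simp)
  have h := ((hasDerivAt_expQi _).scomp s hθ).fun_mul hβ
  refine h.congr_deriv ?_
  simp only [Function.comp_apply, smul_mul_assoc, mul_assoc, mul_sub, mul_smul_comm,
    ← qi_mul_expQi_mul]
  module

theorem geodesic_eq_expQi_mul_osc {lam ω : ℝ} (hω : ω ^ 2 = 1 + lam ^ 2)
    {γ γ' γ'' : ℝ → Quaternion ℝ}
    (hd1 : ∀ s, HasDerivAt γ (γ' s) s) (hd2 : ∀ s, HasDerivAt γ' (γ'' s) s)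
    (hgeo : ∀ s, γ'' s + γ s + (2 * lam) • (qi * γ' s) = 0) (s : ℝ) :
    γ s = expQi (-(lam * s)) * osc ω (γ 0) (γ' 0 + lam • (qi * γ 0)) s := by
  have hω0 : ω ≠ 0 := by rintro rfl; nlinarith
  set a := γ 0
  set v := γ' 0 + lam • (qi * γ 0)
  let β' : ℝ → Quaternion ℝ := fun t => osc ω v (-ω ^ 2 • a) t - lam • (qi * osc ω a v t)
  have hβ' : ∀ t, HasDerivAt β'
      (osc ω (-ω ^ 2 • a) (-ω ^ 2 • v) t - lam • (qi * osc ω v (-ω ^ 2 • a) t)) t := fun t =>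
    (hasDerivAt_osc hω0 _ _ t).sub (((hasDerivAt_osc hω0 a v t).const_mul qi).const_smul lam)
  have hP := fun t => hasDerivAt_expQi_mul lam (hasDerivAt_osc hω0 a v t)
  have hV := fun t => hasDerivAt_expQi_mul lam (hβ' t)
  have hdiff := eq_zero_of_skew_second_order_ode (fun w => (2 * lam) • (qi * w))
    (fun w => by rw [real_inner_smul_left, inner_qi_mul_self, mul_zero])
    (fun t => (hd1 t).sub (hP t)) (fun t => (hd2 t).sub (hV t)) ?_ ?_ ?_ s
  · exact sub_eq_zero.mp hdiff
  · intro t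
    have hsol : expQi (-(lam * t)) * (osc ω (-ω ^ 2 • a) (-ω ^ 2 • v) t
          - lam • (qi * osc ω v (-ω ^ 2 • a) t) - lam • (qi * β' t))
        + expQi (-(lam * t)) * osc ω a v t
        + (2 * lam) • (qi * (expQi (-(lam * t)) * β' t)) = 0 := by
      rw [qi_mul_expQi_mul, ← mul_smul_comm (2 * lam), ← mul_add, ← mul_add, osc_smul]
      convert mul_zero (expQi (-(lam * t)))
      simp only [β', mul_sub, mul_smul_comm, qi_mul_qi_mul]
      linear_combination (norm := module) -(hω • osc ω a v t)
    simp only [Pi.sub_apply, β', mul_sub] at hsol ⊢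
    linear_combination (norm := module) hgeo t - hsol
  · simp [a, osc_zero, expQi_zero]
  · simp [v, a, osc_zero, expQi_zero]

theorem second_deriv_eq_of_horizontal {Γ Γ' Γ'' : ℝ → Quaternion ℝ}
    (hsph : ∀ ε, ‖Γ ε‖ = 1) (hunit : ∀ ε, ‖Γ' ε‖ = 1) (hhor : ∀ ε, ⟪Γ' ε, qi * Γ ε⟫ = 0)
    (hd1 : ∀ ε, HasDerivAt Γ (Γ' ε) ε) (hd2 : ∀ ε, HasDerivAt Γ' (Γ'' ε) ε) (ε : ℝ) :
    Γ'' ε = -Γ ε + ⟪qi * Γ' ε, Γ'' ε⟫ • (qi * Γ' ε) := by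
  have hΓ'Γ' : ∀ e, ⟪Γ' e, Γ' e⟫ = 1 := fun e => by
    rw [real_inner_self_eq_norm_sq, hunit, one_pow]
  have hΓ'Γ : ∀ e, ⟪Γ' e, Γ e⟫ = 0 := fun e => inner_deriv_self_eq_zero_of_norm_const (hd1 e) hsph
  have h₀ : ⟪Γ ε, Γ'' ε⟫ = -1 := by
    linarith [inner_add_inner_eq_zero_of_inner_const (hd2 ε) (hd1 ε) hΓ'Γ, hΓ'Γ' ε,
      real_inner_comm (Γ ε) (Γ'' ε)]
  have h₁ : ⟪qi * Γ ε, Γ'' ε⟫ = 0 := by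
    linarith [inner_add_inner_eq_zero_of_inner_const (hd2 ε) ((hd1 ε).const_mul qi) hhor,
      inner_qi_mul_self (Γ' ε), real_inner_comm (Γ' ε) (qi * Γ' ε),
      real_inner_comm (qi * Γ ε) (Γ'' ε)]
  have h₂ : ⟪Γ' ε, Γ'' ε⟫ = 0 := by
    linarith [inner_add_inner_eq_zero_of_inner_const (hd2 ε) (hd2 ε) hΓ'Γ',
      real_inner_comm (Γ' ε) (Γ'' ε)]
  have hframe := qi_frame_sum_inner_smul
    (orthonormal_qi_frame (hsph ε) (hunit ε) (hΓ'Γ ε) (hhor ε)) (Γ'' ε)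
  rw [h₀, h₁, h₂] at hframe
  refine hframe.symm.trans ?_
  module

-- `a`, `b`, `-a + h • (qi * b)` stand for `Γ`, `Γ'`, `Γ''`; the two sides are `X` and `iγ'`
-- with the factor `expQi (-(lam * s))` removed.
theorem osc_jacobi_eq_qi_mul_velocity {a b : Quaternion ℝ}
    (hO : Orthonormal ℝ ![a, qi * a, b, qi * b]) {lam ω s h : ℝ} (hω : ω ^ 2 = 1 + lam ^ 2)
    (hs : sin (ω * s) ≠ 0)
    (hperp : ⟪osc ω b (qi * (-a + h • (qi * b)) + lam • (qi * b)) s,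
      qi * osc ω a (qi * b + lam • (qi * a)) s⟫ = 0) :
    osc ω b (qi * (-a + h • (qi * b)) + lam • (qi * b)) s =
      qi * (osc ω (qi * b + lam • (qi * a)) (-ω ^ 2 • a) s
        - lam • (qi * osc ω a (qi * b + lam • (qi * a)) s)) := by
  have hω0 : ω ≠ 0 := by rintro rfl; nlinarith
  set c := cos (ω * s)
  set σ := sin (ω * s) / ω
  have hX : osc ω b (qi * (-a + h • (qi * b)) + lam • (qi * b)) s
      = (0 : ℝ) • a + (-σ) • (qi * a) + (c - σ * h) • b + (σ * lam) • (qi * b) := by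
    simp only [osc, mul_add, mul_neg, mul_smul_comm, qi_mul_qi_mul]
    module
  have hqiβ : qi * osc ω a (qi * b + lam • (qi * a)) s
      = (-(σ * lam)) • a + c • (qi * a) + (-σ) • b + (0 : ℝ) • (qi * b) := by
    simp only [osc, mul_add, mul_smul_comm, qi_mul_qi_mul]
    module
  have hJγ' : qi * (osc ω (qi * b + lam • (qi * a)) (-ω ^ 2 • a) s
        - lam • (qi * osc ω a (qi * b + lam • (qi * a)) s))
      = (0 : ℝ) • a + (-σ) • (qi * a) + (-c) • b + (σ * lam) • (qi * b) := by
    simp only [osc, mul_add, mul_sub, mul_neg, mul_smul_comm, qi_mul_qi_mul]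
    linear_combination (norm := module) -((σ * hω) • (qi * a))
  -- the paper's cut-value relation `h = 2ω cot(ωs)`
  have hcut : σ * h = 2 * c := by
    rw [hX, hqiβ, inner_qi_frame hO] at hperp
    have hσ : σ ≠ 0 := div_ne_zero hs hω0
    exact mul_left_cancel₀ hσ (by linear_combination hperp)
  rw [hX, hJγ']
  linear_combination (norm := module) -(hcut • b)

/-- In the setting of geodesics `γ_ε` of curvature `λ` leaving orthogonally from
a C² horizontal arc-length curve `Γ` (`γ_ε(0)=Γ(ε)`, `γ_ε'(0)=i·Γ'(ε)`), at the
cut value `s_ε ∈ (0, π/√(1+λ²))` — where the vertical component of the Jacobi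
field `X_ε = ∂γ/∂ε` vanishes — one has `X_ε(s_ε) = i·γ_ε'(s_ε)`, i.e. `X_ε(s_ε)`
is `J` applied to the geodesic's velocity. -/
theorem jacobi_at_cut_value (lam : ℝ)
    (Γ Γ' Γ'' : ℝ → Quaternion ℝ) (γ γs γss X : ℝ → ℝ → Quaternion ℝ)
    (sε : ℝ → ℝ)
    (hΓsph : ∀ ε, ‖Γ ε‖ = 1) (hΓunit : ∀ ε, ‖Γ' ε‖ = 1)
    (hΓhor : ∀ ε, ⟪Γ' ε, qi * Γ ε⟫ = 0)
    (hΓd1 : ∀ ε, HasDerivAt Γ (Γ' ε) ε) (hΓd2 : ∀ ε, HasDerivAt Γ' (Γ'' ε) ε)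
    (hγ0 : ∀ ε, γ ε 0 = Γ ε) (hγs0 : ∀ ε, γs ε 0 = qi * Γ' ε)
    (hd1 : ∀ ε s, HasDerivAt (γ ε) (γs ε s) s)
    (hd2 : ∀ ε s, HasDerivAt (γs ε) (γss ε s) s)
    (hgeo : ∀ ε s, γss ε s + γ ε s + (2 * lam) • (qi * γs ε s) = 0)
    (hX : ∀ ε s, HasDerivAt (fun e => γ e s) (X ε s) ε)
    (hsε : ∀ ε, sε ε ∈ Set.Ioo 0 (π / Real.sqrt (1 + lam ^ 2)))
    (hzero : ∀ ε, ⟪X ε (sε ε), qi * γ ε (sε ε)⟫ = 0) :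
    ∀ ε, X ε (sε ε) = qi * γs ε (sε ε) := by
  intro ε
  set ω := √(1 + lam ^ 2)
  have hω : ω ^ 2 = 1 + lam ^ 2 := sq_sqrt (by positivity)
  have hω0 : 0 < ω := sqrt_pos.mpr (by positivity)
  obtain ⟨hs0, hsπ⟩ := hsε ε
  set s := sε ε
  have hsin : sin (ω * s) ≠ 0 := (sin_pos_of_pos_of_lt_pi (mul_pos hω0 hs0)
    (by linarith [(lt_div_iff₀ hω0).mp hsπ, mul_comm s ω])).ne'
  have hγ : ∀ e t, γ e t = expQi (-(lam * t)) * osc ω (Γ e) (qi * Γ' e + lam • (qi * Γ e)) t :=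
    fun e t => by rw [geodesic_eq_expQi_mul_osc hω (hd1 e) (hd2 e) (hgeo e), hγ0, hγs0]
  have hXs : X ε s = expQi (-(lam * s)) * osc ω (Γ' ε) (qi * Γ'' ε + lam • (qi * Γ' ε)) s := by
    refine (hX ε s).unique ?_
    simp only [hγ]
    exact (hasDerivAt_osc_data ω s (hΓd1 ε)
      (((hΓd2 ε).const_mul qi).add (((hΓd1 ε).const_mul qi).const_smul lam))).const_mul _
  have hγs : γs ε s = expQi (-(lam * s)) * (osc ω (qi * Γ' ε + lam • (qi * Γ ε)) (-ω ^ 2 • Γ ε) s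
      - lam • (qi * osc ω (Γ ε) (qi * Γ' ε + lam • (qi * Γ ε)) s)) := by
    refine (hd1 ε s).unique ?_
    rw [funext (hγ ε)]
    exact hasDerivAt_expQi_mul lam (hasDerivAt_osc hω0.ne' _ _ s)
  have hΓ'' := second_deriv_eq_of_horizontal hΓsph hΓunit hΓhor hΓd1 hΓd2 ε
  have hperp := hzero ε
  rw [hXs, hγ, qi_mul_expQi_mul, inner_expQi_mul_expQi_mul, hΓ''] at hperp
  rw [hXs, hγs, qi_mul_expQi_mul, hΓ'',
    osc_jacobi_eq_qi_mul_velocity (orthonormal_qi_frame (hΓsph ε) (hΓunit ε)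
      (inner_deriv_self_eq_zero_of_norm_const (hΓd1 ε) hΓsph) (hΓhor ε)) hω hsin hperp]
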